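/- arXiv:2401.14771 — 3 statements merged into one kernel-verified Lean document; each statement's English description precedes it below -/
import Mathlib

section
/- Let α ∈ (1,2), T > 0, and let f : [0,T] × ℝ → ℝ be continuous and satisfy |f(t,x) − f(t,y)| ≤ L|x − y| for all t ∈ [0,T] and x, y ∈ ℝ. Then for any prescribed real numbers y₀ and y₁ there exists exactly one continuous function y : [0,T] → ℝ satisfying y(t) = y₀ + y₁ t + (1/Γ(α)) ∫₀ᵗ (t−s)^{α−1} f(s, y(s)) ds for all t ∈ [0,T]. -/
namespace VolterraAux

open Set intervalIntegral

noncomputable def ker (α t s : ℝ) : ℝ := max (t - s) 0 ^ (α - 1)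

lemma ker_cont {α : ℝ} (hα : 1 < α) : Continuous fun p : ℝ × ℝ => ker α p.1 p.2 := by
  have h : Continuous fun x : ℝ => x ^ (α - 1) := by
    rw [continuous_iff_continuousAt]
    intro x
    exact Real.continuousAt_rpow_const x (α - 1) (Or.inr (by linarith))
  exact h.comp ((continuous_fst.sub continuous_snd).max continuous_const)

lemma ker_nonneg (α t s : ℝ) : 0 ≤ ker α t s := Real.rpow_nonneg (le_max_right _ _) _

lemma ker_eq {t s : ℝ} (α : ℝ) (h : 0 ≤ t - s) : ker α t s = (t - s) ^ (α - 1) := by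
  rw [ker, max_eq_left h]

lemma ker_le {α T t s : ℝ} (hα : 1 < α) (hT : 0 ≤ T) (hs : 0 ≤ s) (ht : t ≤ T) :
    ker α t s ≤ T ^ (α - 1) :=
  Real.rpow_le_rpow (le_max_right _ _) (max_le (by linarith) hT) (by linarith)

noncomputable def G (T : ℝ) (hT : 0 ≤ T) (f : ℝ → ℝ → ℝ) (y : C(Set.Icc (0:ℝ) T, ℝ))
    (s : ℝ) : ℝ :=
  f (Set.projIcc 0 T hT s) (y (Set.projIcc 0 T hT s))

lemma G_cont {T : ℝ} (hT : 0 ≤ T) {f : ℝ → ℝ → ℝ}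
    (hf_cont : ContinuousOn (fun p : ℝ × ℝ => f p.1 p.2) (Set.Icc 0 T ×ˢ Set.univ))
    (y : C(Set.Icc (0:ℝ) T, ℝ)) : Continuous (G T hT f y) := by
  have h1 : Continuous fun s : ℝ =>
      (((Set.projIcc 0 T hT s : Set.Icc (0:ℝ) T) : ℝ), y (Set.projIcc 0 T hT s)) :=
    (continuous_subtype_val.comp continuous_projIcc).prodMk
      (y.continuous.comp continuous_projIcc)
  exact hf_cont.comp_continuous h1 (fun s => ⟨(Set.projIcc 0 T hT s).2, trivial⟩)

noncomputable def Phi (α T y₀ y₁ : ℝ) (hα : 1 < α) (hT : 0 ≤ T) (f : ℝ → ℝ → ℝ)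
    (hf_cont : ContinuousOn (fun p : ℝ × ℝ => f p.1 p.2) (Set.Icc 0 T ×ˢ Set.univ))
    (y : C(Set.Icc (0:ℝ) T, ℝ)) : C(Set.Icc (0:ℝ) T, ℝ) :=
  ContinuousMap.mk
    (fun t => y₀ + y₁ * (t : ℝ) + (1 / Real.Gamma α) *
      ∫ s in (0:ℝ)..(t : ℝ), ker α (t : ℝ) s * G T hT f y s)
    (by
      have hcont : Continuous fun t : ℝ => y₀ + y₁ * t + (1 / Real.Gamma α) *
          ∫ s in (0:ℝ)..t, ker α t s * G T hT f y s := by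
        apply Continuous.add
        · fun_prop
        apply continuous_const.mul
        apply intervalIntegral.continuous_parametric_intervalIntegral_of_continuous
          (f := fun t s => ker α t s * G T hT f y s) _ continuous_id
        exact (ker_cont hα).mul ((G_cont hT hf_cont y).comp continuous_snd)
      exact hcont.comp continuous_subtype_val)

lemma Phi_apply (α T y₀ y₁ : ℝ) (hα : 1 < α) (hT : 0 ≤ T) (f : ℝ → ℝ → ℝ)
    (hf_cont : ContinuousOn (fun p : ℝ × ℝ => f p.1 p.2) (Set.Icc 0 T ×ˢ Set.univ))
    (y : C(Set.Icc (0:ℝ) T, ℝ)) (t : Set.Icc (0:ℝ) T) :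
    Phi α T y₀ y₁ hα hT f hf_cont y t = y₀ + y₁ * (t : ℝ) + (1 / Real.Gamma α) *
      ∫ s in (0:ℝ)..(t : ℝ), ker α (t : ℝ) s * G T hT f y s := rfl

end VolterraAux

/-- Existence and uniqueness of continuous solutions to the Volterra integral
equation equivalent to the Caputo IVP `D^α y = f(t,y)`, `y(0) = y₀`, `y'(0) = y₁`,
for `α ∈ (1,2)`. -/
theorem existence_uniqueness_volterra
    (α T L y₀ y₁ : ℝ) (hα₁ : 1 < α) (hα₂ : α < 2) (hT : 0 < T)
    (f : ℝ → ℝ → ℝ)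
    (hf_cont : ContinuousOn (fun p : ℝ × ℝ => f p.1 p.2) (Set.Icc 0 T ×ˢ Set.univ))
    (hf_lip : ∀ t ∈ Set.Icc (0 : ℝ) T, ∀ x y : ℝ, |f t x - f t y| ≤ L * |x - y|) :
    ∃ y : ℝ → ℝ, ContinuousOn y (Set.Icc 0 T) ∧
      (∀ t ∈ Set.Icc (0 : ℝ) T,
        y t = y₀ + y₁ * t
          + (1 / Real.Gamma α) * ∫ s in (0 : ℝ)..t, (t - s) ^ (α - 1) * f s (y s)) ∧
      (∀ z : ℝ → ℝ, ContinuousOn z (Set.Icc 0 T) →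
        (∀ t ∈ Set.Icc (0 : ℝ) T,
          z t = y₀ + y₁ * t
            + (1 / Real.Gamma α) * ∫ s in (0 : ℝ)..t, (t - s) ^ (α - 1) * f s (z s)) →
        ∀ t ∈ Set.Icc (0 : ℝ) T, z t = y t) := by
  classical
  have hT' : (0:ℝ) ≤ T := hT.le
  have hΓ : 0 < Real.Gamma α := Real.Gamma_pos_of_pos (by linarith)
  set Φ : C(Set.Icc (0:ℝ) T, ℝ) → C(Set.Icc (0:ℝ) T, ℝ) :=
    VolterraAux.Phi α T y₀ y₁ hα₁ hT' f hf_cont with hΦdef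
  set c : ℝ := 1 / Real.Gamma α with hcdef
  have hc : 0 < c := by positivity
  set L' : ℝ := max L 0 with hL'def
  have hL0 : 0 ≤ L' := le_max_right _ _
  have hlip' : ∀ t ∈ Set.Icc (0:ℝ) T, ∀ x y : ℝ, |f t x - f t y| ≤ L' * |x - y| :=
    fun t ht x y => (hf_lip t ht x y).trans
      (mul_le_mul_of_nonneg_right (le_max_left _ _) (abs_nonneg _))
  set M : ℝ := c * (L' * T ^ (α - 1)) with hMdef
  have hM : 0 ≤ M := by positivity
  have hker_t : ∀ r : ℝ, Continuous fun s : ℝ => VolterraAux.ker α r s := fun r =>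
    (VolterraAux.ker_cont hα₁).comp (Continuous.prodMk_right r)
  have hint : ∀ (t : ℝ) (y : C(Set.Icc (0:ℝ) T, ℝ)),
      IntervalIntegrable (fun s => VolterraAux.ker α t s * VolterraAux.G T hT' f y s)
        MeasureTheory.volume 0 t := fun t y =>
    ((hker_t t).mul (VolterraAux.G_cont hT' hf_cont y)).intervalIntegrable 0 t
  have hsub : ∀ y z : C(Set.Icc (0:ℝ) T, ℝ), ∀ t : Set.Icc (0:ℝ) T,
      Φ y t - Φ z t = c * ∫ s in (0:ℝ)..(t:ℝ),
        VolterraAux.ker α (t:ℝ) s *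
          (VolterraAux.G T hT' f y s - VolterraAux.G T hT' f z s) := by
    intro y z t
    rw [hΦdef]
    simp only [VolterraAux.Phi_apply]
    have h1 : (∫ s in (0:ℝ)..(t:ℝ), VolterraAux.ker α (t:ℝ) s *
          (VolterraAux.G T hT' f y s - VolterraAux.G T hT' f z s))
        = (∫ s in (0:ℝ)..(t:ℝ), VolterraAux.ker α (t:ℝ) s * VolterraAux.G T hT' f y s)
          - ∫ s in (0:ℝ)..(t:ℝ), VolterraAux.ker α (t:ℝ) s * VolterraAux.G T hT' f z s := by
      rw [← intervalIntegral.integral_sub (hint _ y) (hint _ z)]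
      apply intervalIntegral.integral_congr
      intro s _
      ring
    rw [h1]
    ring
  have key : ∀ n : ℕ, ∀ y z : C(Set.Icc (0:ℝ) T, ℝ), ∀ t : Set.Icc (0:ℝ) T,
      |Φ^[n] y t - Φ^[n] z t| ≤ M ^ n * (t:ℝ) ^ n / n.factorial * dist y z := by
    intro n
    induction n with
    | zero =>
      intro y z t
      simp only [Function.iterate_zero, id_eq, pow_zero, Nat.factorial_zero, Nat.cast_one,
        mul_one, one_mul, div_one]
      rw [← Real.dist_eq]
      exact ContinuousMap.dist_apply_le_dist t
    | succ n ih =>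
      intro y z t
      obtain ⟨ht0, htT⟩ := t.2
      rw [Function.iterate_succ_apply', Function.iterate_succ_apply']
      set u := Φ^[n] y with hu
      set v := Φ^[n] z with hv
      set D := dist y z with hD
      have hD0 : 0 ≤ D := dist_nonneg
      have hpt : ∀ s ∈ Set.Icc (0:ℝ) (t:ℝ),
          |VolterraAux.ker α (t:ℝ) s *
            (VolterraAux.G T hT' f u s - VolterraAux.G T hT' f v s)|
            ≤ T ^ (α-1) * (L' * (M^n * s^n / n.factorial * D)) := by
        intro s hs
        have hsIcc : s ∈ Set.Icc (0:ℝ) T := ⟨hs.1, hs.2.trans htT⟩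
        rw [abs_mul, abs_of_nonneg (VolterraAux.ker_nonneg α _ s)]
        apply mul_le_mul (VolterraAux.ker_le hα₁ hT' hs.1 htT) ?_ (abs_nonneg _)
          (Real.rpow_nonneg hT' _)
        simp only [VolterraAux.G]
        rw [Set.projIcc_of_mem hT' hsIcc]
        refine (hlip' s hsIcc _ _).trans (mul_le_mul_of_nonneg_left ?_ hL0)
        simpa using ih y z ⟨s, hsIcc⟩
      calc |Φ u t - Φ v t|
          = c * |∫ s in (0:ℝ)..(t:ℝ), VolterraAux.ker α (t:ℝ) s *
              (VolterraAux.G T hT' f u s - VolterraAux.G T hT' f v s)| := by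
            rw [hsub u v t, abs_mul, abs_of_pos hc]
        _ ≤ c * ∫ s in (0:ℝ)..(t:ℝ), |VolterraAux.ker α (t:ℝ) s *
              (VolterraAux.G T hT' f u s - VolterraAux.G T hT' f v s)| :=
            mul_le_mul_of_nonneg_left (intervalIntegral.abs_integral_le_integral_abs ht0) hc.le
        _ ≤ c * ∫ s in (0:ℝ)..(t:ℝ), T ^ (α-1) * (L' * (M^n * s^n / n.factorial * D)) := by
            apply mul_le_mul_of_nonneg_left ?_ hc.le
            apply intervalIntegral.integral_mono_on ht0 ?_ ?_ hpt
            · exact (((hker_t (t:ℝ)).mul ((VolterraAux.G_cont hT' hf_cont u).sub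
                (VolterraAux.G_cont hT' hf_cont v))).abs).intervalIntegrable 0 (t:ℝ)
            · exact (Continuous.intervalIntegrable (by fun_prop) 0 (t:ℝ))
        _ = M^(n+1) * (t:ℝ)^(n+1) / (n+1).factorial * D := by
            have h1 : (fun s : ℝ => T^(α-1) * (L' * (M^n * s^n / n.factorial * D)))
                = fun s : ℝ => (T^(α-1) * L' * M^n * D / n.factorial) * s^n := by
              funext s; ring
            rw [h1, intervalIntegral.integral_const_mul, integral_pow]
            have hfac : ((n.factorial : ℝ)) ≠ 0 := Nat.cast_ne_zero.2 n.factorial_pos.ne'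
            have hfs : (((n+1).factorial : ℝ)) = (n+1) * n.factorial := by
              push_cast [Nat.factorial_succ]; ring
            rw [hfs, hMdef, pow_succ]
            simp only [ne_eq, zero_pow, Nat.succ_ne_zero, not_false_iff]
            field_simp
            ring
  have hdist : ∀ n : ℕ, ∀ y z : C(Set.Icc (0:ℝ) T, ℝ),
      dist (Φ^[n] y) (Φ^[n] z) ≤ (M*T)^n / n.factorial * dist y z := by
    intro n y z
    rw [ContinuousMap.dist_le (by positivity)]
    intro t
    rw [Real.dist_eq]
    refine (key n y z t).trans ?_
    have h1 : ((t:ℝ))^n ≤ T^n := pow_le_pow_left₀ t.2.1 t.2.2 n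
    calc M^n * (t:ℝ)^n / n.factorial * dist y z
        ≤ M^n * T^n / n.factorial * dist y z := by gcongr
      _ = (M*T)^n / n.factorial * dist y z := by rw [← mul_pow]
  obtain ⟨n, hn⟩ : ∃ n : ℕ, (M*T)^n / n.factorial < 1 :=
    ((FloorSemiring.tendsto_pow_div_factorial_atTop (M*T)).eventually_lt_const one_pos).exists
  have h0K : 0 ≤ (M*T)^n / n.factorial := by positivity
  set K : NNReal := ⟨(M*T)^n / n.factorial, h0K⟩ with hKdef
  have hK1 : K < 1 := by
    rw [← NNReal.coe_lt_coe]
    exact hn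
  have hC : ContractingWith K (Φ^[n]) :=
    ⟨hK1, LipschitzWith.of_dist_le_mul fun y z => hdist n y z⟩
  set x := ContractingWith.fixedPoint (Φ^[n]) hC with hxdef
  have hxfix : Function.IsFixedPt (Φ^[n]) x := hC.fixedPoint_isFixedPt
  have hxΦ : Φ x = x := by
    have h1 : Function.IsFixedPt (Φ^[n]) (Φ x) := by
      show Φ^[n] (Φ x) = Φ x
      rw [← Function.iterate_succ_apply, Function.iterate_succ_apply', hxfix.eq]
    have h2 := hC.fixedPoint_unique h1
    rw [← hxdef] at h2
    exact h2
  refine ⟨fun t => x (Set.projIcc 0 T hT' t), (x.continuous.comp continuous_projIcc).continuousOn,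
    ?_, ?_⟩
  · intro t ht
    have hπ : Set.projIcc 0 T hT' t = ⟨t, ht⟩ := Set.projIcc_of_mem hT' ht
    have hInt : (∫ s in (0:ℝ)..t, VolterraAux.ker α t s * VolterraAux.G T hT' f x s)
        = ∫ s in (0:ℝ)..t, (t - s) ^ (α - 1) * f s (x (Set.projIcc 0 T hT' s)) := by
      apply intervalIntegral.integral_congr
      intro s hs
      rw [Set.uIcc_of_le ht.1] at hs
      have hsT : s ∈ Set.Icc (0:ℝ) T := ⟨hs.1, hs.2.trans ht.2⟩
      simp only [VolterraAux.G]
      rw [VolterraAux.ker_eq α (by linarith [hs.2]), Set.projIcc_of_mem hT' hsT]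
    calc x (Set.projIcc 0 T hT' t) = Φ x ⟨t, ht⟩ := by rw [hπ, hxΦ]
      _ = y₀ + y₁ * t + c * ∫ s in (0:ℝ)..t, VolterraAux.ker α t s *
            VolterraAux.G T hT' f x s := by
          rw [hΦdef]; exact VolterraAux.Phi_apply α T y₀ y₁ hα₁ hT' f hf_cont x ⟨t, ht⟩
      _ = y₀ + y₁ * t + c * ∫ s in (0:ℝ)..t, (t - s) ^ (α - 1)
            * f s (x (Set.projIcc 0 T hT' s)) := by rw [hInt]
  · intro z hzc hzeq t ht
    set ζ : C(Set.Icc (0:ℝ) T, ℝ) := ⟨(Set.Icc (0:ℝ) T).restrict z, hzc.restrict⟩ with hζdef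
    have hζΦ : Φ ζ = ζ := by
      ext t'
      obtain ⟨ht0', htT'⟩ := t'.2
      rw [hΦdef]
      rw [VolterraAux.Phi_apply α T y₀ y₁ hα₁ hT' f hf_cont ζ t']
      have h3 : ζ t' = z (t' : ℝ) := rfl
      rw [h3, hzeq (t' : ℝ) t'.2]
      congr 1
      congr 1
      apply intervalIntegral.integral_congr
      intro s hs
      rw [Set.uIcc_of_le ht0'] at hs
      have hsT : s ∈ Set.Icc (0:ℝ) T := ⟨hs.1, hs.2.trans htT'⟩
      simp only [VolterraAux.G]
      rw [VolterraAux.ker_eq α (by linarith [hs.2]), Set.projIcc_of_mem hT' hsT]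
      rfl
    have hζfix : Function.IsFixedPt (Φ^[n]) ζ := Function.IsFixedPt.iterate hζΦ n
    have hζx : ζ = x := by
      rw [hxdef]
      exact hC.fixedPoint_unique hζfix
    show z t = x (Set.projIcc 0 T hT' t)
    rw [Set.projIcc_of_mem hT' ht, ← hζx]
    rfl
end

section
/- Let α ∈ (1,2), T > 0, L > 0, and let f : [0,T] × ℝ → ℝ be continuous with |f(t,x) − f(t,y)| ≤ L|x − y| for all t and x, y. Let y₁, y₂ : [0,T] → ℝ be continuous and satisfy yₖ(t) = y_{k,0} + y_{k,1} t + (1/Γ(α)) ∫₀ᵗ (t−s)^{α−1} f(s, yₖ(s)) ds for k = 1, 2 and all t ∈ [0,T]. Then for all t ∈ [0,T], |y₁(t) − y₂(t)| ≤ (|y_{1,0} − y_{2,0}| + t |y_{1,1} − y_{2,1}|) · E_{α,1}(L t^α). -/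
/-- The two-parameter Mittag-Leffler function `E_{α,β}(z) = ∑ₖ zᵏ / Γ(αk + β)`. -/
noncomputable def mlE (α β z : ℝ) : ℝ := ∑' k : ℕ, z ^ k / Real.Gamma (α * k + β)

/-!
Write `I^α` for the Riemann–Liouville integral and `u = |y₁ - y₂|`. Subtracting the two integral
equations and using the Lipschitz bound gives `u ≤ c + L • I^α u` on `[0, t]`, where
`c = |y₁₀ - y₂₀| + t |y₁₁ - y₂₁|`. Since `L • I^α` maps `L^k s^{αk} / Γ(αk + 1)` to the next such
term (a Beta integral), iterating this inequality `n` times starting from `u ≤ max u` bounds `u` by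
`c` times the `n`-th partial sum of `E_{α,1}(L s^α)`, plus `max u` times its `n`-th term, which
tends to zero.
-/

open Real Set Filter Topology Finset

theorem integral_rpow_mul_sub_rpow {a b t : ℝ} (ha : 0 < a) (hb : 0 < b) (ht : 0 < t) :
    ∫ x in (0:ℝ)..t, x ^ (a - 1) * (t - x) ^ (b - 1)
      = Gamma a * Gamma b / Gamma (a + b) * t ^ (a + b - 1) := by
  have h := Complex.betaIntegral_scaled a b ht
  rw [Complex.betaIntegral_eq_Gamma_mul_div _ _ (by simpa) (by simpa)] at h
  apply Complex.ofReal_injective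
  rw [← intervalIntegral.integral_ofReal]
  convert h using 1
  · refine intervalIntegral.integral_congr fun x hx => ?_
    rw [uIcc_of_le ht.le] at hx
    push_cast
    rw [Complex.ofReal_cpow hx.1, Complex.ofReal_cpow (sub_nonneg.2 hx.2)]
    push_cast; rfl
  · push_cast
    rw [Complex.ofReal_cpow ht.le, ← Complex.Gamma_ofReal, ← Complex.Gamma_ofReal,
      ← Complex.Gamma_ofReal]
    push_cast
    ring

noncomputable def riemannLiouville (α : ℝ) (g : ℝ → ℝ) (t : ℝ) : ℝ :=
  1 / Gamma α * ∫ s in (0:ℝ)..t, (t - s) ^ (α - 1) * g s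

section riemannLiouville

variable {α t : ℝ} {g h : ℝ → ℝ}

theorem riemannLiouville_rpow (hα : 0 < α) {β : ℝ} (hβ : 0 ≤ β) (ht : 0 ≤ t) :
    riemannLiouville α (fun s => s ^ β) t = Gamma (β + 1) / Gamma (α + β + 1) * t ^ (α + β) := by
  rcases ht.eq_or_lt with rfl | ht
  · simp [riemannLiouville, zero_rpow (by positivity : α + β ≠ 0)]
  have h := integral_rpow_mul_sub_rpow (by positivity : 0 < β + 1) hα ht
  rw [add_sub_cancel_right, add_comm (β + 1) α, ← add_assoc, add_sub_cancel_right] at h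
  rw [riemannLiouville, intervalIntegral.integral_congr fun s _ => mul_comm _ _, h]
  field_simp [(Gamma_pos_of_pos hα).ne']

theorem riemannLiouville_const_mul (c : ℝ) (g : ℝ → ℝ) (α t : ℝ) :
    riemannLiouville α (fun s => c * g s) t = c * riemannLiouville α g t := by
  simp only [riemannLiouville, mul_left_comm _ c, intervalIntegral.integral_const_mul]

theorem intervalIntegrable_rpow_sub_mul (hα : 1 ≤ α) (ht : 0 ≤ t)
    (hg : ContinuousOn g (Icc 0 t)) :
    IntervalIntegrable (fun s => (t - s) ^ (α - 1) * g s) MeasureTheory.volume 0 t := by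
  refine ContinuousOn.intervalIntegrable ?_
  rw [uIcc_of_le ht]
  have hkernel : Continuous fun s => (t - s) ^ (α - 1) :=
    (continuous_const.sub continuous_id).rpow_const fun _ => Or.inr (by linarith)
  exact hkernel.continuousOn.mul hg

theorem riemannLiouville_sub (hα : 1 ≤ α) (ht : 0 ≤ t) (hg : ContinuousOn g (Icc 0 t))
    (hh : ContinuousOn h (Icc 0 t)) :
    riemannLiouville α (fun s => g s - h s) t =
      riemannLiouville α g t - riemannLiouville α h t := by
  simp only [riemannLiouville, mul_sub,
    intervalIntegral.integral_sub (intervalIntegrable_rpow_sub_mul hα ht hg)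
      (intervalIntegrable_rpow_sub_mul hα ht hh)]

theorem riemannLiouville_add (hα : 1 ≤ α) (ht : 0 ≤ t) (hg : ContinuousOn g (Icc 0 t))
    (hh : ContinuousOn h (Icc 0 t)) :
    riemannLiouville α (fun s => g s + h s) t =
      riemannLiouville α g t + riemannLiouville α h t := by
  simp only [riemannLiouville, mul_add,
    intervalIntegral.integral_add (intervalIntegrable_rpow_sub_mul hα ht hg)
      (intervalIntegrable_rpow_sub_mul hα ht hh)]

theorem riemannLiouville_finsetSum {ι : Type*} (s : Finset ι) {g : ι → ℝ → ℝ} (hα : 1 ≤ α)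
    (ht : 0 ≤ t) (hg : ∀ i ∈ s, ContinuousOn (g i) (Icc 0 t)) :
    riemannLiouville α (fun r => ∑ i ∈ s, g i r) t = ∑ i ∈ s, riemannLiouville α (g i) t := by
  simp only [riemannLiouville, mul_sum, intervalIntegral.integral_finsetSum fun i hi =>
    intervalIntegrable_rpow_sub_mul hα ht (hg i hi)]

theorem riemannLiouville_mono (hα : 1 ≤ α) (ht : 0 ≤ t) (hg : ContinuousOn g (Icc 0 t))
    (hh : ContinuousOn h (Icc 0 t)) (hgh : ∀ s ∈ Icc 0 t, g s ≤ h s) :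
    riemannLiouville α g t ≤ riemannLiouville α h t := by
  have hΓ : 0 ≤ 1 / Gamma α := by have := Gamma_pos_of_pos (by linarith : 0 < α); positivity
  refine mul_le_mul_of_nonneg_left (intervalIntegral.integral_mono_on ht
    (intervalIntegrable_rpow_sub_mul hα ht hg) (intervalIntegrable_rpow_sub_mul hα ht hh)
    fun s hs => ?_) hΓ
  exact mul_le_mul_of_nonneg_left (hgh s hs) (rpow_nonneg (sub_nonneg.2 hs.2) _)

theorem riemannLiouville_abs_le (hα : 1 ≤ α) (ht : 0 ≤ t) (hg : ContinuousOn g (Icc 0 t))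
    (hh : ContinuousOn h (Icc 0 t)) (hgh : ∀ s ∈ Icc 0 t, |g s| ≤ h s) :
    |riemannLiouville α g t| ≤ riemannLiouville α h t := by
  have hneg : riemannLiouville α (fun s => -h s) t = -riemannLiouville α h t := by
    simpa only [neg_one_mul] using riemannLiouville_const_mul (-1) h α t
  refine _root_.abs_le.2 ⟨?_, riemannLiouville_mono hα ht hg hh fun s hs =>
    (le_abs_self _).trans (hgh s hs)⟩
  rw [← hneg]
  exact riemannLiouville_mono hα ht hh.neg hg fun s hs => neg_le_of_abs_le (hgh s hs)

end riemannLiouville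

noncomputable def mlTerm (α L : ℝ) (k : ℕ) (t : ℝ) : ℝ := L ^ k * t ^ (α * k) / Gamma (α * k + 1)

section mlTerm

variable {α L t : ℝ}

@[simp]
theorem mlTerm_zero : mlTerm α L 0 t = 1 := by simp [mlTerm]

theorem mlTerm_eq (ht : 0 ≤ t) (k : ℕ) :
    mlTerm α L k t = (L * t ^ α) ^ k / Gamma (α * k + 1) := by
  rw [mlTerm, mul_pow, rpow_mul ht, rpow_natCast]

theorem continuous_mlTerm (hα : 0 ≤ α) (k : ℕ) : Continuous (mlTerm α L k) :=
  ((continuous_id.rpow_const fun _ => Or.inr (by positivity)).const_mul _).div_const _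

theorem mul_riemannLiouville_mlTerm (hα : 0 < α) (ht : 0 ≤ t) (k : ℕ) :
    L * riemannLiouville α (mlTerm α L k) t = mlTerm α L (k + 1) t := by
  have hk : 0 < Gamma (α * k + 1) := Gamma_pos_of_pos (by positivity)
  have h := riemannLiouville_const_mul (L ^ k / Gamma (α * k + 1)) (fun s => s ^ (α * k)) α t
  simp only [riemannLiouville_rpow hα (by positivity : 0 ≤ α * k) ht] at h
  rw [show mlTerm α L k = fun s => L ^ k / Gamma (α * k + 1) * s ^ (α * k) by
    ext s; rw [mlTerm]; ring, h, mlTerm]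
  push_cast
  rw [show α * (k + 1) = α + α * k by ring]
  field_simp
  ring

theorem add_mul_riemannLiouville_mlTerm_sum (hα : 1 ≤ α) (ht : 0 ≤ t) (c M : ℝ) (n : ℕ) :
    c + L * riemannLiouville α (fun s => c * ∑ k ∈ range n, mlTerm α L k s + M * mlTerm α L n s) t
      = c * ∑ k ∈ range (n + 1), mlTerm α L k t + M * mlTerm α L (n + 1) t := by
  have hcont : ∀ k, ContinuousOn (mlTerm α L k) (Icc 0 t) :=
    fun k => (continuous_mlTerm (by linarith) k).continuousOn
  rw [riemannLiouville_add (g := fun s => c * ∑ k ∈ range n, mlTerm α L k s)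
      (h := fun s => M * mlTerm α L n s) hα ht
      (continuousOn_const.mul (continuousOn_finsetSum _ fun k _ => hcont k))
      (continuousOn_const.mul (hcont n)), riemannLiouville_const_mul, riemannLiouville_const_mul,
    riemannLiouville_finsetSum _ hα ht fun k _ => hcont k, mul_add, mul_left_comm, mul_sum,
    mul_left_comm L M, mul_riemannLiouville_mlTerm (by linarith) ht, sum_range_succ']
  simp only [mul_riemannLiouville_mlTerm (by linarith : 0 < α) ht, mlTerm_zero]
  ring

end mlTerm

theorem factorial_le_Gamma_mul_add_one {α : ℝ} (hα : 1 ≤ α) (k : ℕ) :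
    (k.factorial : ℝ) ≤ Gamma (α * k + 1) := by
  rcases Nat.eq_zero_or_pos k with rfl | hk
  · simp
  rw [← Gamma_nat_eq_factorial]
  have hk : (1 : ℝ) ≤ k := by exact_mod_cast hk
  exact Gamma_strictMonoOn_Ici.monotoneOn (by simp; linarith) (by simp; nlinarith) (by nlinarith)

theorem summable_pow_div_Gamma_mul_add_one {α x : ℝ} (hα : 1 ≤ α) (hx : 0 ≤ x) :
    Summable fun k : ℕ => x ^ k / Gamma (α * k + 1) :=
  (summable_pow_div_factorial x).of_nonneg_of_le (fun k => by positivity) fun k =>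
    div_le_div_of_nonneg_left (by positivity) (by positivity) (factorial_le_Gamma_mul_add_one hα k)

theorem le_mul_mlE_of_le_add_riemannLiouville {α L c t : ℝ} {u : ℝ → ℝ} (hα : 1 ≤ α)
    (hL : 0 ≤ L) (ht : 0 ≤ t) (hu : ContinuousOn u (Icc 0 t))
    (h : ∀ s ∈ Icc 0 t, u s ≤ c + L * riemannLiouville α u s) :
    u t ≤ c * mlE α 1 (L * t ^ α) := by
  obtain ⟨t₁, -, hM⟩ := isCompact_Icc.exists_isMaxOn (nonempty_Icc.2 ht) hu
  have hiter : ∀ n : ℕ, ∀ s ∈ Icc 0 t,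
      u s ≤ c * ∑ k ∈ range n, mlTerm α L k s + u t₁ * mlTerm α L n s := by
    intro n
    induction n with
    | zero => simpa using fun s hs => hM hs
    | succ n ih =>
      intro s hs
      have hsub : Icc 0 s ⊆ Icc 0 t := Icc_subset_Icc_right hs.2
      have hmlTerm := continuous_mlTerm (L := L) (by linarith : 0 ≤ α)
      have hcont :
          Continuous fun r => c * ∑ k ∈ range n, mlTerm α L k r + u t₁ * mlTerm α L n r :=
        (continuous_const.mul (continuous_finsetSum _ fun k _ => hmlTerm k)).add
          (continuous_const.mul (hmlTerm n))
      calc u s ≤ c + L * riemannLiouville α u s := h s hs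
        _ ≤ c + L * riemannLiouville α
              (fun r => c * ∑ k ∈ range n, mlTerm α L k r + u t₁ * mlTerm α L n r) s := by
          gcongr
          exact riemannLiouville_mono hα hs.1 (hu.mono hsub) hcont.continuousOn
            fun r hr => ih r (hsub hr)
        _ = _ := add_mul_riemannLiouville_mlTerm_sum hα hs.1 c (u t₁) n
  have hsum := summable_pow_div_Gamma_mul_add_one hα (by positivity : 0 ≤ L * t ^ α)
  have hlim : Tendsto (fun n => c * ∑ k ∈ range n, mlTerm α L k t + u t₁ * mlTerm α L n t) atTop
      (𝓝 (c * mlE α 1 (L * t ^ α) + u t₁ * 0)) := by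
    simp only [mlTerm_eq ht]
    exact (hsum.hasSum.tendsto_sum_nat.const_mul c).add (hsum.tendsto_atTop_zero.const_mul _)
  simpa using ge_of_tendsto' hlim fun n => hiter n t ⟨ht, le_rfl⟩

theorem gronwall_separation_bound_general
    (α T L y₁₀ y₁₁ y₂₀ y₂₁ : ℝ) (hα₁ : 1 < α) (hL : 0 < L)
    (f : ℝ → ℝ → ℝ)
    (hf_cont : ContinuousOn (fun p : ℝ × ℝ => f p.1 p.2) (Set.Icc 0 T ×ˢ Set.univ))
    (hf_lip : ∀ t ∈ Set.Icc (0 : ℝ) T, ∀ x y : ℝ, |f t x - f t y| ≤ L * |x - y|)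
    (y₁ y₂ : ℝ → ℝ)
    (hy₁cont : ContinuousOn y₁ (Set.Icc 0 T)) (hy₂cont : ContinuousOn y₂ (Set.Icc 0 T))
    (hy₁ : ∀ t ∈ Set.Icc (0 : ℝ) T,
      y₁ t = y₁₀ + y₁₁ * t
        + (1 / Real.Gamma α) * ∫ s in (0 : ℝ)..t, (t - s) ^ (α - 1) * f s (y₁ s))
    (hy₂ : ∀ t ∈ Set.Icc (0 : ℝ) T,
      y₂ t = y₂₀ + y₂₁ * t
        + (1 / Real.Gamma α) * ∫ s in (0 : ℝ)..t, (t - s) ^ (α - 1) * f s (y₂ s)) :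
    ∀ t ∈ Set.Icc (0 : ℝ) T,
      |y₁ t - y₂ t| ≤ (|y₁₀ - y₂₀| + t * |y₁₁ - y₂₁|) * mlE α 1 (L * t ^ α) := by
  intro t ht
  have hsubT : ∀ {s}, s ∈ Icc 0 t → Icc 0 s ⊆ Icc (0 : ℝ) T :=
    fun hs => Icc_subset_Icc_right (hs.2.trans ht.2)
  have hF : ∀ y : ℝ → ℝ, ContinuousOn y (Icc 0 T) →
      ContinuousOn (fun s => f s (y s)) (Icc 0 T) :=
    fun y hy => hf_cont.comp (continuousOn_id.prodMk hy) fun s hs => ⟨hs, mem_univ _⟩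
  refine le_mul_mlE_of_le_add_riemannLiouville (u := fun r => |y₁ r - y₂ r|) hα₁.le hL.le ht.1
    ((hy₁cont.sub hy₂cont).abs.mono (hsubT (right_mem_Icc.2 ht.1))) fun s hs => ?_
  have hsT := hsubT hs
  have hsep : y₁ s - y₂ s = (y₁₀ - y₂₀) + (y₁₁ - y₂₁) * s
      + riemannLiouville α (fun r => f r (y₁ r) - f r (y₂ r)) s := by
    rw [riemannLiouville_sub hα₁.le hs.1 ((hF y₁ hy₁cont).mono hsT) ((hF y₂ hy₂cont).mono hsT),
      hy₁ s (hsT (right_mem_Icc.2 hs.1)), hy₂ s (hsT (right_mem_Icc.2 hs.1)), riemannLiouville,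
      riemannLiouville]
    ring
  have hlip : |riemannLiouville α (fun r => f r (y₁ r) - f r (y₂ r)) s|
      ≤ L * riemannLiouville α (fun r => |y₁ r - y₂ r|) s := by
    rw [← riemannLiouville_const_mul]
    exact riemannLiouville_abs_le hα₁.le hs.1 (((hF y₁ hy₁cont).sub (hF y₂ hy₂cont)).mono hsT)
      (continuousOn_const.mul ((hy₁cont.sub hy₂cont).abs.mono hsT))
      fun r hr => hf_lip r (hsT hr) _ _
  calc |y₁ s - y₂ s| ≤ |y₁₀ - y₂₀| + s * |y₁₁ - y₂₁|
        + |riemannLiouville α (fun r => f r (y₁ r) - f r (y₂ r)) s| := by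
        rw [hsep]
        refine (abs_add_three _ _ _).trans_eq ?_
        rw [abs_mul, abs_of_nonneg hs.1, mul_comm]
    _ ≤ _ := by gcongr; exact hs.2

/-- Gronwall-type upper bound for the separation of two solutions of the same
fractional differential equation of order `α ∈ (1,2)` with different initial data. -/
theorem gronwall_separation_bound
    (α T L y₁₀ y₁₁ y₂₀ y₂₁ : ℝ) (hα₁ : 1 < α) (hα₂ : α < 2) (hT : 0 < T) (hL : 0 < L)
    (f : ℝ → ℝ → ℝ)
    (hf_cont : ContinuousOn (fun p : ℝ × ℝ => f p.1 p.2) (Set.Icc 0 T ×ˢ Set.univ))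
    (hf_lip : ∀ t ∈ Set.Icc (0 : ℝ) T, ∀ x y : ℝ, |f t x - f t y| ≤ L * |x - y|)
    (y₁ y₂ : ℝ → ℝ)
    (hy₁cont : ContinuousOn y₁ (Set.Icc 0 T)) (hy₂cont : ContinuousOn y₂ (Set.Icc 0 T))
    (hy₁ : ∀ t ∈ Set.Icc (0 : ℝ) T,
      y₁ t = y₁₀ + y₁₁ * t
        + (1 / Real.Gamma α) * ∫ s in (0 : ℝ)..t, (t - s) ^ (α - 1) * f s (y₁ s))
    (hy₂ : ∀ t ∈ Set.Icc (0 : ℝ) T,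
      y₂ t = y₂₀ + y₂₁ * t
        + (1 / Real.Gamma α) * ∫ s in (0 : ℝ)..t, (t - s) ^ (α - 1) * f s (y₂ s)) :
    ∀ t ∈ Set.Icc (0 : ℝ) T,
      |y₁ t - y₂ t| ≤ (|y₁₀ - y₂₀| + t * |y₁₁ - y₂₁|) * mlE α 1 (L * t ^ α) :=
  gronwall_separation_bound_general α T L y₁₀ y₁₁ y₂₀ y₂₁ hα₁ hL f hf_cont hf_lip y₁ y₂ hy₁cont
    hy₂cont hy₁ hy₂
end

section
/- Let α ∈ (1,2), T > 0, L > 0, and let f : [0,T] × ℝ → ℝ be continuous with |f(t,x) − f(t,y)| ≤ L|x − y| for all t and x, y. Let y₁, y₂ : [0,T] → ℝ be continuous and satisfy yₖ(t) = y_{k,0} + y_{k,1} t + (1/Γ(α)) ∫₀ᵗ (t−s)^{α−1} f(s, yₖ(s)) ds for k = 1, 2. Suppose T* ∈ (0,T] is such that for all t ∈ [0,T*]: (y_{2,0} − y_{1,0}) E_{α,1}(−L t^α) + (y_{2,1} − y_{1,1}) t E_{α,2}(−L t^α) > 0 and E_{α,α}(−L t^α) > 0. Then y₁(t) < y₂(t)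 for all t ∈ [0,T*]. -/
/-!
Let `z = y₂ - y₁` and `g = f(·, y₂) - f(·, y₁)`, so that `z` solves the linear Volterra equation
with data `a = y₂₀ - y₁₀`, `b = y₂₁ - y₁₁` and forcing `g`. Writing `g = -L z + (L z + g)` and
solving with the resolvent kernel `e(t) = t^(α-1) E_{α,α}(-L t^α)` gives the variation of
constants formula
  `z t = a E_{α,1}(-L t^α) + b t E_{α,2}(-L t^α) + ∫₀ᵗ e(t - u) (L z u + g u) du`.
Up to the first zero of `z` the Lipschitz bound gives `L z + g ≥ 0`, so the integral is
nonnegative while the first two terms are positive by hypothesis: `z` cannot reach zero.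

The formula itself follows by integrating the series of `t^(β-1) E_{α,β}(-L t^α)` term by term
against fractional powers (Beta integrals), exchanging the order of integration over the
triangle `0 ≤ u ≤ s ≤ t`, and using the recurrence
`L t^(α+β-1) E_{α,α+β}(-L t^α) + t^(β-1) E_{α,β}(-L t^α) = t^(β-1) / Γ(β)`.
-/

open Set Real Filter MeasureTheory
open scoped Nat

lemma integral_rpow_sub_mul_rpow {p q t : ℝ} (hp : 0 < p) (hq : 0 < q) (ht : 0 < t) :
    ∫ s in (0 : ℝ)..t, (t - s) ^ (p - 1) * s ^ (q - 1)
      = Gamma p * Gamma q / Gamma (p + q) * t ^ (p + q - 1) := by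
  have hbeta := Complex.betaIntegral_scaled q p ht
  rw [Complex.betaIntegral_eq_Gamma_mul_div _ _ (by simpa) (by simpa)] at hbeta
  apply Complex.ofReal_injective
  rw [← intervalIntegral.integral_ofReal]
  convert hbeta using 1
  · refine intervalIntegral.integral_congr fun s hs => ?_
    rw [uIcc_of_le ht.le] at hs
    push_cast
    rw [Complex.ofReal_cpow (by linarith [hs.2]), Complex.ofReal_cpow hs.1]
    push_cast
    ring
  · rw [← Complex.ofReal_add, Complex.Gamma_ofReal, Complex.Gamma_ofReal, Complex.Gamma_ofReal,
      ← Complex.ofReal_one, ← Complex.ofReal_sub, ← Complex.ofReal_cpow ht.le, add_comm q p]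
    push_cast
    ring

lemma integral_integral_triangle_swap {F : ℝ → ℝ → ℝ} {t : ℝ} (ht : 0 ≤ t)
    (hF : ContinuousOn (Function.uncurry F) (Icc 0 t ×ˢ Icc 0 t)) :
    ∫ s in (0 : ℝ)..t, ∫ u in (0 : ℝ)..s, F s u = ∫ u in (0 : ℝ)..t, ∫ s in u..t, F s u := by
  set H : ℝ → ℝ → ℝ := fun s u => {p : ℝ × ℝ | p.2 < p.1}.indicator (Function.uncurry F) (s, u)
  have hH : Integrable (Function.uncurry H)
      ((volume.restrict (Ioc 0 t)).prod (volume.restrict (Ioc 0 t))) := by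
    rw [Measure.prod_restrict, ← Measure.volume_eq_prod]
    exact ((hF.integrableOn_compact (isCompact_Icc.prod isCompact_Icc)).mono_set
      (prod_mono Ioc_subset_Icc_self Ioc_subset_Icc_self)).indicator
      (measurableSet_lt measurable_snd measurable_fst)
  have hleft : ∀ s ∈ Ioc 0 t, ∫ u in Ioc 0 t, H s u = ∫ u in (0 : ℝ)..s, F s u := by
    intro s hs
    have : H s = (Iio s).indicator (F s) := by
      ext u; simp [H, indicator_apply]
    rw [this, setIntegral_indicator measurableSet_Iio, intervalIntegral.integral_of_le hs.1.le,
      integral_Ioc_eq_integral_Ioo]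
    congr 2
    ext u; simp only [mem_inter_iff, mem_Ioc, mem_Iio, mem_Ioo]
    exact ⟨fun h => ⟨h.1.1, h.2⟩, fun h => ⟨⟨h.1, by linarith [hs.2]⟩, h.2⟩⟩
  have hright : ∀ u ∈ Ioc 0 t, ∫ s in Ioc 0 t, H s u = ∫ s in u..t, F s u := by
    intro u hu
    have : (fun s => H s u) = (Ioi u).indicator (fun s => F s u) := by
      ext s; simp [H, indicator_apply]
    rw [this, setIntegral_indicator measurableSet_Ioi, intervalIntegral.integral_of_le hu.2]
    congr 2
    ext s; simp only [mem_inter_iff, mem_Ioc, mem_Ioi]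
    exact ⟨fun h => ⟨h.2, h.1.2⟩, fun h => ⟨⟨by linarith [hu.1], h.2⟩, h.1⟩⟩
  rw [intervalIntegral.integral_of_le ht, intervalIntegral.integral_of_le ht,
    ← setIntegral_congr_fun measurableSet_Ioc hleft,
    ← setIntegral_congr_fun measurableSet_Ioc hright]
  exact integral_integral_swap hH

lemma forall_mem_Icc_pos_of_continuousOn {z : ℝ → ℝ} {a b : ℝ} (hz : ContinuousOn z (Icc a b))
    (hstep : ∀ t ∈ Icc a b, (∀ u ∈ Ico a t, 0 < z u) → 0 < z t) : ∀ t ∈ Icc a b, 0 < z t := by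
  by_contra! h
  set S := Icc a b ∩ z ⁻¹' Iic 0
  have hS : IsClosed S := hz.preimage_isClosed_of_isClosed isClosed_Icc isClosed_Iic
  have hne : S.Nonempty := let ⟨t, ht, hzt⟩ := h; ⟨t, ht, hzt⟩
  have hbdd : BddBelow S := ⟨a, fun x hx => hx.1.1⟩
  have hmem := hS.csInf_mem hne hbdd
  refine (hstep _ hmem.1 fun u hu => ?_).not_ge hmem.2
  by_contra! hzu
  exact notMem_of_lt_csInf hu.2 hbdd ⟨⟨hu.1, hu.2.le.trans hmem.1.2⟩, hzu⟩

/-- `z = a + b t + I^α g` on `[0, T]`, the integral form of `D^α z = g`, `z 0 = a`, `z' 0 = b`. -/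
def IsVolterraSolution (α a b T : ℝ) (g z : ℝ → ℝ) : Prop :=
  ∀ t ∈ Icc 0 T, z t = a + b * t + 1 / Gamma α * ∫ s in (0 : ℝ)..t, (t - s) ^ (α - 1) * g s

lemma IsVolterraSolution.mono {α a b T T' : ℝ} {g z : ℝ → ℝ} (h : IsVolterraSolution α a b T g z)
    (hT : T' ≤ T) : IsVolterraSolution α a b T' g z :=
  fun t ht => h t (Icc_subset_Icc_right hT ht)

lemma IsVolterraSolution.sub {α a₁ b₁ a₂ b₂ T : ℝ} (hα : 1 ≤ α) {y₁ y₂ h₁ h₂ : ℝ → ℝ}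
    (hh₁ : ContinuousOn h₁ (Icc 0 T)) (hh₂ : ContinuousOn h₂ (Icc 0 T))
    (hy₁ : IsVolterraSolution α a₁ b₁ T h₁ y₁) (hy₂ : IsVolterraSolution α a₂ b₂ T h₂ y₂) :
    IsVolterraSolution α (a₂ - a₁) (b₂ - b₁) T (fun s => h₂ s - h₁ s) (fun s => y₂ s - y₁ s) := by
  intro t ht
  have hpow : ContinuousOn (fun s => (t - s) ^ (α - 1)) (Icc 0 t) :=
    ((continuous_const.sub continuous_id).rpow_const fun _ => Or.inr (by linarith)).continuousOn
  have hint : ∀ h : ℝ → ℝ, ContinuousOn h (Icc 0 T) →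
      IntervalIntegrable (fun s => (t - s) ^ (α - 1) * h s) volume 0 t := fun h hh =>
    (hpow.mul (hh.mono (Icc_subset_Icc_right ht.2))).intervalIntegrable_of_Icc ht.1
  simp only [mul_sub (_ ^ _)]
  rw [hy₁ t ht, hy₂ t ht, intervalIntegral.integral_sub (hint h₂ hh₂) (hint h₁ hh₁)]
  ring

noncomputable def mlKernelTerm (α β L : ℝ) (n : ℕ) (t : ℝ) : ℝ :=
  (-L) ^ n * t ^ (α * n + β - 1) / Gamma (α * n + β)

/-- `t^(β-1) E_{α,β}(-L t^α)`, written as a power series in `t` so that it can be integrated term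
by term. -/
noncomputable def mlKernel (α β L t : ℝ) : ℝ := ∑' n, mlKernelTerm α β L n t

section MittagLefflerKernel

variable {α β L : ℝ}

lemma rpow_mul_natCast_add_sub_one {t : ℝ} (ht : 0 ≤ t) (hα : 0 ≤ α) (hβ : 1 ≤ β) (n : ℕ) :
    t ^ (α * n + β - 1) = (t ^ α) ^ n * t ^ (β - 1) := by
  rw [add_sub_assoc, rpow_add_of_nonneg ht (by positivity) (by linarith), rpow_mul_natCast ht]

lemma mlKernel_eq_rpow_mul_mlE {t : ℝ} (ht : 0 ≤ t) (hα : 0 ≤ α) (hβ : 1 ≤ β) :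
    mlKernel α β L t = t ^ (β - 1) * mlE α β (-(L * t ^ α)) := by
  rw [mlKernel, mlE, ← tsum_mul_left]
  refine tsum_congr fun n => ?_
  rw [mlKernelTerm, rpow_mul_natCast_add_sub_one ht hα hβ, neg_mul_eq_neg_mul, mul_pow]
  ring

lemma mlKernel_zero (hα : 0 ≤ α) (hβ : 1 < β) : mlKernel α β L 0 = 0 := by
  refine (tsum_congr fun n => ?_).trans tsum_zero
  rw [mlKernelTerm, zero_rpow (by nlinarith [mul_nonneg hα n.cast_nonneg]), mul_zero, zero_div]

lemma factorial_le_Gamma_mul_natCast_add (hα : 1 ≤ α) (hβ : 1 ≤ β) {n : ℕ} (hn : 1 ≤ n) :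
    (n ! : ℝ) ≤ Gamma (α * n + β) := by
  have hn' : (1 : ℝ) ≤ n := by exact_mod_cast hn
  rw [← Gamma_nat_eq_factorial]
  exact Gamma_strictMonoOn_Ici.monotoneOn (mem_Ici.mpr (by linarith)) (mem_Ici.mpr (by nlinarith))
    (by nlinarith)

lemma norm_mlKernelTerm_le (hα : 0 ≤ α) (hβ : 1 ≤ β) (n : ℕ) {s t : ℝ} (hs : 0 ≤ s)
    (hst : s ≤ t) : ‖mlKernelTerm α β L n s‖ ≤ ‖mlKernelTerm α β L n t‖ := by
  have hΓ : 0 < Gamma (α * n + β) := Gamma_pos_of_pos (by positivity)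
  simp only [mlKernelTerm, norm_div, norm_mul, norm_pow, norm_neg, Real.norm_eq_abs,
    abs_of_pos hΓ, abs_of_nonneg (rpow_nonneg hs _), abs_of_nonneg (rpow_nonneg (hs.trans hst) _)]
  gcongr
  linarith [mul_nonneg hα n.cast_nonneg]

lemma summable_norm_mlKernelTerm (hα : 1 ≤ α) (hβ : 1 ≤ β) {t : ℝ} (ht : 0 ≤ t) :
    Summable fun n => ‖mlKernelTerm α β L n t‖ := by
  refine Summable.of_norm_bounded_eventually_nat
    ((Real.summable_pow_div_factorial (|L| * t ^ α)).mul_left (t ^ (β - 1))) ?_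
  filter_upwards [eventually_ge_atTop 1] with n hn
  have hΓ : 0 < Gamma (α * n + β) := Gamma_pos_of_pos (by positivity)
  have hC : 0 ≤ t ^ (β - 1) * (|L| * t ^ α) ^ n := by positivity
  calc ‖‖mlKernelTerm α β L n t‖‖ = t ^ (β - 1) * (|L| * t ^ α) ^ n / Gamma (α * n + β) := by
        rw [norm_norm, mlKernelTerm, rpow_mul_natCast_add_sub_one ht (by linarith) hβ]
        simp only [norm_div, norm_mul, norm_pow, norm_neg, Real.norm_eq_abs, abs_of_pos hΓ,
          abs_of_nonneg (rpow_nonneg ht _), mul_pow]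
        ring
    _ ≤ t ^ (β - 1) * (|L| * t ^ α) ^ n / n ! :=
        div_le_div_of_nonneg_left hC (by positivity) (factorial_le_Gamma_mul_natCast_add hα hβ hn)
    _ = t ^ (β - 1) * ((|L| * t ^ α) ^ n / n !) := mul_div_assoc _ _ _

lemma continuous_mlKernelTerm (hα : 0 ≤ α) (hβ : 1 ≤ β) (n : ℕ) :
    Continuous (mlKernelTerm α β L n) :=
  (continuous_const.mul
    (continuous_rpow_const (by nlinarith [mul_nonneg hα n.cast_nonneg]))).div_const _

lemma continuousOn_mlKernel (hα : 1 ≤ α) (hβ : 1 ≤ β) {M : ℝ} (hM : 0 ≤ M) :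
    ContinuousOn (mlKernel α β L) (Icc 0 M) :=
  continuousOn_tsum (fun n => (continuous_mlKernelTerm (by linarith) hβ n).continuousOn)
    (summable_norm_mlKernelTerm hα hβ hM)
    fun n s hs => norm_mlKernelTerm_le (by linarith) hβ n hs.1 hs.2

lemma continuousOn_mlKernel_sub (hα : 1 ≤ α) (hβ : 1 ≤ β) {t : ℝ} (ht : 0 ≤ t) :
    ContinuousOn (fun s => mlKernel α β L (t - s)) (Icc 0 t) :=
  (continuousOn_mlKernel hα hβ ht).comp (continuous_const.sub continuous_id).continuousOn
    fun s hs => ⟨by linarith [hs.2], by linarith [hs.1]⟩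

lemma mlKernelTerm_succ (n : ℕ) (t : ℝ) :
    mlKernelTerm α β L (n + 1) t = -L * mlKernelTerm α (α + β) L n t := by
  have h : α * ((n + 1 : ℕ) : ℝ) + β = α * n + (α + β) := by push_cast; ring
  rw [mlKernelTerm, mlKernelTerm, h, pow_succ]
  ring

lemma mlKernel_recurrence (hα : 1 ≤ α) (hβ : 1 ≤ β) {t : ℝ} (ht : 0 ≤ t) :
    L * mlKernel α (α + β) L t + mlKernel α β L t = t ^ (β - 1) / Gamma β := by
  rw [mlKernel, mlKernel, (summable_norm_mlKernelTerm hα hβ ht).of_norm.tsum_eq_zero_add]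
  simp only [mlKernelTerm_succ, tsum_mul_left]
  simp [mlKernelTerm]

lemma integral_mlKernelTerm_sub_mul_rpow (hα : 0 ≤ α) (hβ : 1 ≤ β) {γ : ℝ} (hγ : 0 < γ) (n : ℕ)
    {t : ℝ} (ht : 0 < t) :
    ∫ s in (0 : ℝ)..t, mlKernelTerm α β L n (t - s) * s ^ (γ - 1)
      = Gamma γ * mlKernelTerm α (β + γ) L n t := by
  have hp : 0 < α * n + β := by positivity
  have hΓ : Gamma (α * n + β) ≠ 0 := (Gamma_pos_of_pos hp).ne'
  calc ∫ s in (0 : ℝ)..t, mlKernelTerm α β L n (t - s) * s ^ (γ - 1)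
      = (-L) ^ n / Gamma (α * n + β)
        * ∫ s in (0 : ℝ)..t, (t - s) ^ (α * n + β - 1) * s ^ (γ - 1) := by
        rw [← intervalIntegral.integral_const_mul]
        refine intervalIntegral.integral_congr fun s _ => ?_
        simp only [mlKernelTerm]
        ring
    _ = Gamma γ * mlKernelTerm α (β + γ) L n t := by
        rw [integral_rpow_sub_mul_rpow hp hγ ht, mlKernelTerm, ← add_assoc]
        field_simp

lemma integral_mlKernel_sub_mul_rpow (hα : 1 ≤ α) (hβ : 1 ≤ β) {γ : ℝ} (hγ : 1 ≤ γ) {t : ℝ}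
    (ht : 0 ≤ t) :
    ∫ s in (0 : ℝ)..t, mlKernel α β L (t - s) * s ^ (γ - 1) = Gamma γ * mlKernel α (β + γ) L t := by
  rcases ht.eq_or_lt with rfl | ht
  · rw [intervalIntegral.integral_same, mlKernel_zero (by linarith) (by linarith), mul_zero]
  have hsum : HasSum (fun n => ∫ s in (0 : ℝ)..t, mlKernelTerm α β L n (t - s) * s ^ (γ - 1))
      (∫ s in (0 : ℝ)..t, mlKernel α β L (t - s) * s ^ (γ - 1)) :=
    intervalIntegral.hasSum_integral_of_dominated_convergence
      (fun n _ => ‖mlKernelTerm α β L n t‖ * t ^ (γ - 1))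
      (fun n => (((continuous_mlKernelTerm (by linarith) hβ n).comp
        (continuous_const.sub continuous_id)).mul
        (continuous_rpow_const (by linarith))).aestronglyMeasurable)
      (fun n => ae_of_all _ fun s hs => ?_)
      (ae_of_all _ fun s _ => (summable_norm_mlKernelTerm hα hβ ht.le).mul_right _)
      intervalIntegrable_const
      (ae_of_all _ fun s hs => ?_)
  · rw [← hsum.tsum_eq, mlKernel, ← tsum_mul_left]
    exact tsum_congr fun n => integral_mlKernelTerm_sub_mul_rpow (by linarith) hβ (by linarith) n ht
  · rw [uIoc_of_le ht.le] at hs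
    rw [norm_mul, Real.norm_of_nonneg (rpow_nonneg hs.1.le _)]
    exact mul_le_mul
      (norm_mlKernelTerm_le (by linarith) hβ n (by linarith [hs.2]) (by linarith [hs.1]))
      (rpow_le_rpow hs.1.le hs.2 (by linarith)) (rpow_nonneg hs.1.le _) (norm_nonneg _)
  · rw [uIoc_of_le ht.le] at hs
    have hts : 0 ≤ t - s := by linarith [hs.2]
    exact (summable_norm_mlKernelTerm hα hβ hts).of_norm.hasSum.mul_right _

lemma integral_mlKernel_sub_mul_linear (hα : 1 ≤ α) (hβ : 1 ≤ β) (a b : ℝ) {t : ℝ} (ht : 0 ≤ t) :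
    ∫ s in (0 : ℝ)..t, mlKernel α β L (t - s) * (a + b * s)
      = a * mlKernel α (β + 1) L t + b * mlKernel α (β + 2) L t := by
  have h₁ := integral_mlKernel_sub_mul_rpow (L := L) hα hβ le_rfl ht
  have h₂ := integral_mlKernel_sub_mul_rpow (L := L) hα hβ one_le_two ht
  rw [sub_self] at h₁
  rw [show (2 : ℝ) - 1 = 1 by norm_num] at h₂
  simp only [rpow_zero, rpow_one, mul_one, Gamma_one, Gamma_two, one_mul] at h₁ h₂
  have hc := (continuousOn_mlKernel_sub (L := L) hα hβ ht).intervalIntegrable_of_Icc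
    (μ := volume) ht
  rw [← h₁, ← h₂, ← intervalIntegral.integral_const_mul, ← intervalIntegral.integral_const_mul,
    ← intervalIntegral.integral_add (f := fun s => a * mlKernel α β L (t - s))
      (g := fun s => b * (mlKernel α β L (t - s) * s))
      (hc.const_mul a) ((hc.mul_continuousOn continuousOn_id).const_mul b)]
  exact intervalIntegral.integral_congr fun s _ => by ring

lemma integral_mlKernel_sub_mul_integral_rpow (hα : 1 ≤ α) (hβ : 1 ≤ β) {γ : ℝ} (hγ : 1 ≤ γ)
    {g : ℝ → ℝ} {t : ℝ} (ht : 0 ≤ t) (hg : ContinuousOn g (Icc 0 t)) :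
    ∫ s in (0 : ℝ)..t, mlKernel α β L (t - s) * ∫ u in (0 : ℝ)..s, (s - u) ^ (γ - 1) * g u
      = Gamma γ * ∫ u in (0 : ℝ)..t, mlKernel α (β + γ) L (t - u) * g u := by
  have hinner : ∀ u ∈ uIcc 0 t, ∫ s in u..t, mlKernel α β L (t - s) * (s - u) ^ (γ - 1)
      = Gamma γ * mlKernel α (β + γ) L (t - u) := by
    intro u hu
    rw [uIcc_of_le ht] at hu
    have h := intervalIntegral.integral_comp_sub_right (a := u) (b := t)
      (fun v => mlKernel α β L (t - u - v) * v ^ (γ - 1)) u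
    simp only [sub_sub_sub_cancel_right, sub_self] at h
    rw [h, integral_mlKernel_sub_mul_rpow hα hβ hγ (by linarith [hu.2])]
  have hF : ContinuousOn
      (Function.uncurry fun s u => mlKernel α β L (t - s) * ((s - u) ^ (γ - 1) * g u))
      (Icc 0 t ×ˢ Icc 0 t) :=
    ((continuousOn_mlKernel_sub hα hβ ht).comp continuous_fst.continuousOn fun p hp => hp.1).mul
      (((continuous_fst.sub continuous_snd).rpow_const fun _ => Or.inr (by linarith)).continuousOn
        |>.mul (hg.comp continuous_snd.continuousOn fun p hp => hp.2))
  simp_rw [← intervalIntegral.integral_const_mul]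
  rw [integral_integral_triangle_swap ht hF]
  refine intervalIntegral.integral_congr fun u hu => ?_
  rw [← mul_assoc, ← hinner u hu, ← intervalIntegral.integral_mul_const]
  exact intervalIntegral.integral_congr fun s _ => by ring

section Volterra

variable {a b t : ℝ} {z g : ℝ → ℝ}

lemma IsVolterraSolution.integral_mlKernel_sub_mul (hα : 1 ≤ α) (ht : 0 ≤ t)
    (hz : ContinuousOn z (Icc 0 t)) (hg : ContinuousOn g (Icc 0 t))
    (hzg : IsVolterraSolution α a b t g z) :
    ∫ s in (0 : ℝ)..t, mlKernel α α L (t - s) * z s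
      = a * mlKernel α (α + 1) L t + b * mlKernel α (α + 2) L t
        + ∫ u in (0 : ℝ)..t, mlKernel α (α + α) L (t - u) * g u := by
  have he := continuousOn_mlKernel_sub (L := L) hα hα ht
  have hlin : ContinuousOn (fun s => a + b * s) (Icc 0 t) := by fun_prop
  have hΓ : Gamma α ≠ 0 := (Gamma_pos_of_pos (by linarith)).ne'
  calc ∫ s in (0 : ℝ)..t, mlKernel α α L (t - s) * z s
      = (∫ s in (0 : ℝ)..t, mlKernel α α L (t - s) * (a + b * s))
        + ∫ s in (0 : ℝ)..t, mlKernel α α L (t - s) * (z s - (a + b * s)) := by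
        rw [← intervalIntegral.integral_add (f := fun s => mlKernel α α L (t - s) * (a + b * s))
          (g := fun s => mlKernel α α L (t - s) * (z s - (a + b * s)))
          ((he.mul hlin).intervalIntegrable_of_Icc ht)
          ((he.mul (hz.sub hlin)).intervalIntegrable_of_Icc ht)]
        exact intervalIntegral.integral_congr fun s _ => by ring
    _ = a * mlKernel α (α + 1) L t + b * mlKernel α (α + 2) L t
        + 1 / Gamma α * ∫ s in (0 : ℝ)..t,
          mlKernel α α L (t - s) * ∫ u in (0 : ℝ)..s, (s - u) ^ (α - 1) * g u := by
        rw [integral_mlKernel_sub_mul_linear hα hα a b ht, ← intervalIntegral.integral_const_mul]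
        congr 1
        refine intervalIntegral.integral_congr fun s hs => ?_
        rw [uIcc_of_le ht] at hs
        simp only [hzg s hs]
        ring
    _ = _ := by
        rw [integral_mlKernel_sub_mul_integral_rpow hα hα hα ht hg]
        field_simp

lemma IsVolterraSolution.eq_mlKernel_add_integral (hα : 1 ≤ α) (ht : 0 ≤ t)
    (hz : ContinuousOn z (Icc 0 t)) (hg : ContinuousOn g (Icc 0 t))
    (hzg : IsVolterraSolution α a b t g z) :
    z t = a * mlKernel α 1 L t + b * mlKernel α 2 L t
      + ∫ u in (0 : ℝ)..t, mlKernel α α L (t - u) * (L * z u + g u) := by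
  have he := continuousOn_mlKernel_sub (L := L) hα hα ht
  have he₂ := continuousOn_mlKernel_sub (L := L) hα (by linarith : 1 ≤ α + α) ht
  have h₁ := mlKernel_recurrence (L := L) hα le_rfl ht
  have h₂ := mlKernel_recurrence (L := L) hα one_le_two ht
  rw [sub_self, rpow_zero, Gamma_one, div_one] at h₁
  rw [show (2 : ℝ) - 1 = 1 by norm_num, rpow_one, Gamma_two, div_one] at h₂
  have hsplit : ∫ u in (0 : ℝ)..t, mlKernel α α L (t - u) * (L * z u + g u)
      = L * (∫ u in (0 : ℝ)..t, mlKernel α α L (t - u) * z u)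
        + ∫ u in (0 : ℝ)..t, mlKernel α α L (t - u) * g u := by
    rw [← intervalIntegral.integral_const_mul, ← intervalIntegral.integral_add
      (f := fun u => L * (mlKernel α α L (t - u) * z u))
      (g := fun u => mlKernel α α L (t - u) * g u)
      (((he.mul hz).const_smul L).intervalIntegrable_of_Icc ht)
      ((he.mul hg).intervalIntegrable_of_Icc ht)]
    exact intervalIntegral.integral_congr fun u _ => by ring
  have hkernel : L * (∫ u in (0 : ℝ)..t, mlKernel α (α + α) L (t - u) * g u)
        + ∫ u in (0 : ℝ)..t, mlKernel α α L (t - u) * g u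
      = 1 / Gamma α * ∫ u in (0 : ℝ)..t, (t - u) ^ (α - 1) * g u := by
    rw [← intervalIntegral.integral_const_mul, ← intervalIntegral.integral_const_mul,
      ← intervalIntegral.integral_add (f := fun u => L * (mlKernel α (α + α) L (t - u) * g u))
        (g := fun u => mlKernel α α L (t - u) * g u)
        (((he₂.mul hg).const_smul L).intervalIntegrable_of_Icc ht)
        ((he.mul hg).intervalIntegrable_of_Icc ht)]
    refine intervalIntegral.integral_congr fun u hu => ?_
    rw [uIcc_of_le ht] at hu
    have hrec := mlKernel_recurrence (L := L) hα hα (by linarith [hu.2] : 0 ≤ t - u)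
    linear_combination g u * hrec
  rw [hsplit, hzg.integral_mlKernel_sub_mul hα ht hz hg, hzg t ⟨ht, le_rfl⟩]
  linear_combination (-a) * h₁ - b * h₂ - hkernel

lemma IsVolterraSolution.pos_of_neg_mul_le (hα : 1 ≤ α) (ht : 0 ≤ t)
    (hz : ContinuousOn z (Icc 0 t)) (hg : ContinuousOn g (Icc 0 t))
    (hzg : IsVolterraSolution α a b t g z)
    (hinit : 0 < a * mlKernel α 1 L t + b * mlKernel α 2 L t)
    (hkernel : ∀ τ ∈ Ioo 0 t, 0 ≤ mlKernel α α L τ) (hgz : ∀ u ∈ Ioo 0 t, -(L * z u) ≤ g u) :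
    0 < z t := by
  have hint : 0 ≤ ∫ u in (0 : ℝ)..t, mlKernel α α L (t - u) * (L * z u + g u) := by
    rw [intervalIntegral.integral_of_le ht, integral_Ioc_eq_integral_Ioo]
    refine setIntegral_nonneg measurableSet_Ioo fun u hu => mul_nonneg ?_ (by linarith [hgz u hu])
    exact hkernel _ ⟨by linarith [hu.2], by linarith [hu.1]⟩
  rw [hzg.eq_mlKernel_add_integral hα ht hz hg]
  linarith

end Volterra

end MittagLefflerKernel

theorem solutions_separate_general
    (α T Tstar L y₁₀ y₁₁ y₂₀ y₂₁ : ℝ) (hα₁ : 1 < α)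
    (f : ℝ → ℝ → ℝ)
    (hf_cont : ContinuousOn (fun p : ℝ × ℝ => f p.1 p.2) (Set.Icc 0 T ×ˢ Set.univ))
    (hf_lip : ∀ t ∈ Set.Icc (0 : ℝ) T, ∀ x y : ℝ, |f t x - f t y| ≤ L * |x - y|)
    (y₁ y₂ : ℝ → ℝ)
    (hy₁cont : ContinuousOn y₁ (Set.Icc 0 T)) (hy₂cont : ContinuousOn y₂ (Set.Icc 0 T))
    (hy₁ : ∀ t ∈ Set.Icc (0 : ℝ) T,
      y₁ t = y₁₀ + y₁₁ * t
        + (1 / Real.Gamma α) * ∫ s in (0 : ℝ)..t, (t - s) ^ (α - 1) * f s (y₁ s))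
    (hy₂ : ∀ t ∈ Set.Icc (0 : ℝ) T,
      y₂ t = y₂₀ + y₂₁ * t
        + (1 / Real.Gamma α) * ∫ s in (0 : ℝ)..t, (t - s) ^ (α - 1) * f s (y₂ s))
    (hTstarT : Tstar ≤ T)
    (hpos₁ : ∀ t ∈ Set.Icc (0 : ℝ) Tstar,
      (y₂₀ - y₁₀) * mlE α 1 (-(L * t ^ α)) + (y₂₁ - y₁₁) * t * mlE α 2 (-(L * t ^ α)) > 0)
    (hpos₂ : ∀ t ∈ Set.Icc (0 : ℝ) Tstar, mlE α α (-(L * t ^ α)) > 0) :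
    ∀ t ∈ Set.Icc (0 : ℝ) Tstar, y₁ t < y₂ t := by
  have hα : 1 ≤ α := hα₁.le
  have hsub : Icc 0 Tstar ⊆ Icc 0 T := Icc_subset_Icc_right hTstarT
  have hfy : ∀ y : ℝ → ℝ, ContinuousOn y (Icc 0 T) →
      ContinuousOn (fun s => f s (y s)) (Icc 0 Tstar) := fun y hy =>
    (hf_cont.comp (continuousOn_id.prodMk hy) fun s hs => ⟨hs, mem_univ _⟩).mono hsub
  have hz := IsVolterraSolution.sub hα (hfy y₁ hy₁cont) (hfy y₂ hy₂cont)
    (IsVolterraSolution.mono hy₁ hTstarT) (IsVolterraSolution.mono hy₂ hTstarT)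
  suffices ∀ t ∈ Icc 0 Tstar, 0 < y₂ t - y₁ t from fun t ht => sub_pos.mp (this t ht)
  refine forall_mem_Icc_pos_of_continuousOn ((hy₂cont.sub hy₁cont).mono hsub) fun t ht hpos => ?_
  have hsub' : Icc 0 t ⊆ Icc 0 Tstar := Icc_subset_Icc_right ht.2
  refine (hz.mono ht.2).pos_of_neg_mul_le (L := L) (t := t) hα ht.1
    ((hy₂cont.sub hy₁cont).mono (hsub'.trans hsub))
    (((hfy y₂ hy₂cont).sub (hfy y₁ hy₁cont)).mono hsub') ?_ ?_ ?_
  · rw [mlKernel_eq_rpow_mul_mlE ht.1 (by linarith) le_rfl,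
      mlKernel_eq_rpow_mul_mlE ht.1 (by linarith) one_le_two]
    norm_num
    linarith [hpos₁ t ht]
  · intro τ hτ
    rw [mlKernel_eq_rpow_mul_mlE hτ.1.le (by linarith) hα]
    exact mul_nonneg (rpow_nonneg hτ.1.le _) (hpos₂ τ ⟨hτ.1.le, hτ.2.le.trans ht.2⟩).le
  · intro u hu
    have hlip := hf_lip u (hsub (hsub' (Ioo_subset_Icc_self hu))) (y₂ u) (y₁ u)
    rw [abs_of_pos (hpos u ⟨hu.1.le, hu.2⟩)] at hlip
    exact neg_le_of_abs_le hlip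

/-- Separation theorem (Theorem 2.4 of the paper): under positivity conditions on
certain Mittag-Leffler functions on `[0,T*]`, two solutions of the same equation
remain strictly ordered on `[0,T*]`. -/
theorem solutions_separate
    (α T Tstar L y₁₀ y₁₁ y₂₀ y₂₁ : ℝ) (hα₁ : 1 < α) (hα₂ : α < 2)
    (hT : 0 < T) (hL : 0 < L)
    (f : ℝ → ℝ → ℝ)
    (hf_cont : ContinuousOn (fun p : ℝ × ℝ => f p.1 p.2) (Set.Icc 0 T ×ˢ Set.univ))
    (hf_lip : ∀ t ∈ Set.Icc (0 : ℝ) T, ∀ x y : ℝ, |f t x - f t y| ≤ L * |x - y|)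
    (y₁ y₂ : ℝ → ℝ)
    (hy₁cont : ContinuousOn y₁ (Set.Icc 0 T)) (hy₂cont : ContinuousOn y₂ (Set.Icc 0 T))
    (hy₁ : ∀ t ∈ Set.Icc (0 : ℝ) T,
      y₁ t = y₁₀ + y₁₁ * t
        + (1 / Real.Gamma α) * ∫ s in (0 : ℝ)..t, (t - s) ^ (α - 1) * f s (y₁ s))
    (hy₂ : ∀ t ∈ Set.Icc (0 : ℝ) T,
      y₂ t = y₂₀ + y₂₁ * t
        + (1 / Real.Gamma α) * ∫ s in (0 : ℝ)..t, (t - s) ^ (α - 1) * f s (y₂ s))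
    (hTstar : 0 < Tstar) (hTstarT : Tstar ≤ T)
    (hpos₁ : ∀ t ∈ Set.Icc (0 : ℝ) Tstar,
      (y₂₀ - y₁₀) * mlE α 1 (-(L * t ^ α)) + (y₂₁ - y₁₁) * t * mlE α 2 (-(L * t ^ α)) > 0)
    (hpos₂ : ∀ t ∈ Set.Icc (0 : ℝ) Tstar, mlE α α (-(L * t ^ α)) > 0) :
    ∀ t ∈ Set.Icc (0 : ℝ) Tstar, y₁ t < y₂ t :=
  solutions_separate_general α T Tstar L y₁₀ y₁₁ y₂₀ y₂₁ hα₁ f hf_cont hf_lip y₁ y₂ hy₁cont hy₂cont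
    hy₁ hy₂ hTstarT hpos₁ hpos₂
end
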